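/- Let G_φ be the mapping torus group of an injective endomorphism φ : F → F of a free group F, with stable letter t. Let u ∈ F, m ≥ 1 an integer, s = u t^m, and let V ≤ F be a nontrivial finitely generated subgroup such that s V s⁻¹ ≤ V, and set H = ⟨s, V⟩ ≤ G_φ (so H is a sub-mapping torus subgroup). Then H is isomorphic to the mapping torus group G_ψ = ⟨V, s | s y s⁻¹ = ψ(y) for all y ∈ V⟩ of the injective endomorphism ψ : V → V defined by ψ(y) = u φ^m(y) u⁻¹, via an isomorphism that restricts to the identity on V and sends the stable letter of G_ψ to s. -/

import Mathlib

/-- The set of relators for the mapping torus (ascending HNN extension) of an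
endomorphism `ψ : G →* G`: generators are the elements of `G` together with one
stable letter `t`, relators are the multiplication table of `G` together with
`t g t⁻¹ = ψ g` for all `g : G`. -/
def mappingTorusRels (G : Type*) [Group G] (ψ : G →* G) : Set (FreeGroup (G ⊕ Unit)) :=
  (Set.range fun p : G × G =>
      FreeGroup.of (Sum.inl p.1) * FreeGroup.of (Sum.inl p.2) *
        (FreeGroup.of (Sum.inl (p.1 * p.2)))⁻¹) ∪
  (Set.range fun g : G =>
      FreeGroup.of (Sum.inr ()) * FreeGroup.of (Sum.inl g) * (FreeGroup.of (Sum.inr ()))⁻¹ *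
        (FreeGroup.of (Sum.inl (ψ g)))⁻¹)

/-- The mapping torus group `G_ψ = ⟨G, t | t x t⁻¹ = ψ(x), x ∈ G⟩` of an endomorphism
`ψ : G →* G`. -/
abbrev MappingTorus {G : Type*} [Group G] (ψ : G →* G) : Type _ :=
  PresentedGroup (mappingTorusRels G ψ)

/-- The canonical homomorphism of the base group into the mapping torus. -/
def MappingTorus.base {G : Type*} [Group G] (ψ : G →* G) : G →* MappingTorus ψ :=
  MonoidHom.mk' (fun g => PresentedGroup.of (rels := mappingTorusRels G ψ) (Sum.inl g))
    (by
      intro g h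
      have key : PresentedGroup.mk (mappingTorusRels G ψ)
          (FreeGroup.of (Sum.inl g) * FreeGroup.of (Sum.inl h) *
            (FreeGroup.of (Sum.inl (g * h)))⁻¹) = 1 := by
        apply (QuotientGroup.eq_one_iff _).mpr
        exact Subgroup.subset_normalClosure (Or.inl ⟨(g, h), rfl⟩)
      rw [map_mul, map_mul, map_inv, mul_inv_eq_one] at key
      exact key.symm)

/-- The stable letter `t` of the mapping torus. -/
def MappingTorus.stable {G : Type*} [Group G] (ψ : G →* G) : MappingTorus ψ :=
  PresentedGroup.of (Sum.inr ())

/-- A subgroup is generated by two elements. -/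
def TwoGenerated {Γ : Type*} [Group Γ] (H : Subgroup Γ) : Prop :=
  ∃ x y : Γ, H = Subgroup.closure {x, y}

/-- A group is free (on some basis). -/
def IsFree (Γ : Type*) [Group Γ] : Prop :=
  ∃ S : Set Γ, Nonempty (FreeGroup S ≃* Γ)

/-- `iterateHom φ m` is the `m`-th power `φ^m` of the endomorphism `φ` under composition. -/
def iterateHom {Γ : Type*} [Group Γ] (φ : Γ →* Γ) : ℕ → (Γ →* Γ)
  | 0 => MonoidHom.id Γ
  | n + 1 => φ.comp (iterateHom φ n)

/-- `H` is a finitary sub-mapping torus subgroup of the mapping torus of `φ`: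
`H = ⟨s, V⟩` where `s = u t^m`, `u ∈ F`, `m ≥ 1`, `V ≤ F` nontrivial finitely generated
and `s V s⁻¹ ≤ V`. -/
def IsSubMappingTorus {α : Type*} (φ : FreeGroup α →* FreeGroup α)
    (H : Subgroup (MappingTorus φ)) : Prop :=
  ∃ (u : FreeGroup α) (m : ℕ) (V : Subgroup (FreeGroup α)),
    1 ≤ m ∧ V ≠ ⊥ ∧ V.FG ∧
    H = Subgroup.closure (insert (MappingTorus.base φ u * MappingTorus.stable φ ^ m)
          ((V.map (MappingTorus.base φ) : Subgroup (MappingTorus φ)) : Set (MappingTorus φ))) ∧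
    ∀ g ∈ V.map (MappingTorus.base φ),
      (MappingTorus.base φ u * MappingTorus.stable φ ^ m) * g *
        (MappingTorus.base φ u * MappingTorus.stable φ ^ m)⁻¹ ∈ V.map (MappingTorus.base φ)

/-- `U` is a free factor of `Γ`: there is a subgroup `W` such that `Γ` is the internal
free product of `U` and `W`, i.e. the canonical map `U ∗ W → Γ` is an isomorphism. -/
def IsFreeFactor {Γ : Type*} [Group Γ] (U : Subgroup Γ) : Prop :=
  ∃ W : Subgroup Γ, Function.Bijective (Monoid.Coprod.lift U.subtype W.subtype)

/-- The outer class of the automorphism `φ` is fully irreducible: no positive power of `φ`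
maps a nontrivial proper free factor to a conjugate of itself. -/
def FullyIrreducible {Γ : Type*} [Group Γ] (φ : MulAut Γ) : Prop :=
  ¬ ∃ (p : ℕ) (U : Subgroup Γ) (g : Γ), 1 ≤ p ∧ U ≠ ⊥ ∧ U ≠ ⊤ ∧ IsFreeFactor U ∧
      U.map (φ ^ p).toMonoidHom = U.map (MulAut.conj g).toMonoidHom

/-- The automorphism `φ` is atoroidal: no positive power of `φ` fixes a nontrivial
conjugacy class. -/
def Atoroidal {Γ : Type*} [Group Γ] (φ : MulAut Γ) : Prop :=
  ¬ ∃ (p : ℕ) (u : Γ), 1 ≤ p ∧ u ≠ 1 ∧ IsConj ((φ ^ p) u) u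

/-- The single relator `b a b⁻¹ a` of the Klein bottle group `⟨a, b | b a b⁻¹ = a⁻¹⟩`. -/
def kleinBottleRels : Set (FreeGroup (Fin 2)) :=
  {FreeGroup.of 1 * FreeGroup.of 0 * (FreeGroup.of 1)⁻¹ * FreeGroup.of 0}

/-- The Klein bottle group `BS(1,-1) = ⟨a, b | b a b⁻¹ = a⁻¹⟩`. -/
abbrev KleinBottleGroup : Type := PresentedGroup kleinBottleRels

/-- `Γ` is a free abelian group of rank `n`. -/
def FreeAbelianOfRank (Γ : Type*) [Group Γ] (n : ℕ) : Prop :=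
  Nonempty (Γ ≃* Multiplicative (Fin n → ℤ))

/-!
A homomorphism out of a mapping torus is determined by a homomorphism on the base and an element
conjugating it according to the endomorphism; sending `V` to itself and the stable letter to
`s = u t^m` gives a homomorphism `G_ψ → G_φ` whose image is `⟨s, V⟩`. Every element of `G_ψ` has
the form `t⁻ᵖ y tᵠ`, and the stable-letter exponent `G_φ → ℤ` takes the value `m(q - p)` on its
image; so if the image is trivial then `p = q`, and then `y = 1` because `V` embeds in `G_φ`
when `φ` is injective.
-/

namespace MappingTorus

variable {G : Type*} [Group G] (ψ : G →* G)

noncomputable def lift {K : Type*} [Group K] (f : G →* K) (t : K)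
    (h : ∀ g, t * f g = f (ψ g) * t) : MappingTorus ψ →* K :=
  PresentedGroup.toGroup (f := Sum.elim f fun _ => t) <| by
    rintro r (⟨⟨a, b⟩, rfl⟩ | ⟨g, rfl⟩)
    · simp
    · simp [h]

section lift

variable {ψ} {K : Type*} [Group K] (f : G →* K) (t : K) (h : ∀ g, t * f g = f (ψ g) * t)

@[simp]
theorem lift_base (g : G) : lift ψ f t h (base ψ g) = f g :=
  PresentedGroup.toGroup.of _

@[simp]
theorem lift_stable : lift ψ f t h (stable ψ) = t :=
  PresentedGroup.toGroup.of _

theorem lift_comp_base : (lift ψ f t h).comp (base ψ) = f :=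
  MonoidHom.ext (lift_base f t h)

theorem range_lift : (lift ψ f t h).range = Subgroup.closure (insert t (f.range : Set K)) := by
  have hgen : ⇑(lift ψ f t h) ∘ PresentedGroup.of = Sum.elim f fun _ => t := by
    ext (g | _)
    exacts [lift_base f t h g, lift_stable f t h]
  rw [MonoidHom.range_eq_map, ← PresentedGroup.closure_range_of, MonoidHom.map_closure,
    ← Set.range_comp, hgen, Set.Sum.elim_range, Set.range_const, Set.union_singleton,
    MonoidHom.coe_range]

end lift

theorem stable_mul_base (g : G) : stable ψ * base ψ g = base ψ (ψ g) * stable ψ := by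
  rw [← mul_inv_eq_one, ← mul_inv_eq_one]
  exact PresentedGroup.one_of_mem (Or.inr ⟨g, rfl⟩)

theorem stable_pow_mul_base (k : ℕ) (g : G) :
    stable ψ ^ k * base ψ g = base ψ (iterateHom ψ k g) * stable ψ ^ k := by
  induction k with
  | zero => simp [iterateHom]
  | succ k ih =>
    rw [pow_succ', mul_assoc, ih, ← mul_assoc, stable_mul_base, mul_assoc, ← pow_succ']
    rfl

theorem base_mul_inv_stable_pow (k : ℕ) (g : G) :
    base ψ g * (stable ψ ^ k)⁻¹ = (stable ψ ^ k)⁻¹ * base ψ (iterateHom ψ k g) := by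
  rw [eq_inv_mul_iff_mul_eq, ← mul_assoc, stable_pow_mul_base, mul_inv_cancel_right]

theorem base_mul_stable_pow_mul_base (u : G) (m : ℕ) (g : G) :
    base ψ u * stable ψ ^ m * base ψ g =
      base ψ (u * iterateHom ψ m g * u⁻¹) * (base ψ u * stable ψ ^ m) := by
  rw [mul_assoc, stable_pow_mul_base]
  simp [mul_assoc]

theorem lift_base_stable : lift ψ (base ψ) (stable ψ) (stable_mul_base ψ) = MonoidHom.id _ :=
  PresentedGroup.ext <| by
    rintro (g | _)
    exacts [lift_base _ _ _ g, lift_stable _ _ _]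

theorem closure_insert_stable_range_base :
    Subgroup.closure (insert (stable ψ) ((base ψ).range : Set (MappingTorus ψ))) = ⊤ := by
  rw [← range_lift (base ψ) (stable ψ) (stable_mul_base ψ), lift_base_stable]
  exact MonoidHom.range_eq_top_of_surjective _ Function.surjective_id

theorem exists_eq_inv_stable_pow_mul_base_mul_stable_pow (x : MappingTorus ψ) :
    ∃ (p q : ℕ) (g : G), x = (stable ψ ^ p)⁻¹ * base ψ g * stable ψ ^ q := by
  have base_mul (h : G) (p q : ℕ) (g : G) :
      base ψ h * ((stable ψ ^ p)⁻¹ * base ψ g * stable ψ ^ q) =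
        (stable ψ ^ p)⁻¹ * base ψ (iterateHom ψ p h * g) * stable ψ ^ q := by
    rw [← mul_assoc, ← mul_assoc, base_mul_inv_stable_pow, map_mul, mul_assoc (stable ψ ^ p)⁻¹]
  have hx : x ∈ Subgroup.closure (insert (stable ψ) ((base ψ).range : Set (MappingTorus ψ))) :=
    closure_insert_stable_range_base ψ ▸ Subgroup.mem_top x
  induction hx using Subgroup.closure_induction_left with
  | one => exact ⟨0, 0, 1, by simp⟩
  | mul_left a ha y _ ih =>
    obtain ⟨p, q, g, rfl⟩ := ih
    obtain rfl | ⟨h, rfl⟩ := ha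
    · cases p with
      | zero =>
        refine ⟨0, q + 1, ψ g, ?_⟩
        simp only [pow_zero, inv_one, one_mul]
        rw [pow_succ', ← mul_assoc, stable_mul_base, mul_assoc]
      | succ p => exact ⟨p, q, g, by rw [pow_succ]; group⟩
    · exact ⟨p, q, _, base_mul h p q g⟩
  | inv_mul_cancel a ha y _ ih =>
    obtain ⟨p, q, g, rfl⟩ := ih
    obtain rfl | ⟨h, rfl⟩ := ha
    · exact ⟨p + 1, q, g, by rw [pow_succ, mul_inv_rev]; group⟩
    · exact ⟨p, q, _, by rw [← map_inv]; exact base_mul h⁻¹ p q g⟩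

noncomputable def exponent : MappingTorus ψ →* Multiplicative ℤ :=
  lift ψ 1 (Multiplicative.ofAdd 1) (by simp)

@[simp]
theorem exponent_base (g : G) : exponent ψ (base ψ g) = 1 :=
  lift_base _ _ _ g

@[simp]
theorem exponent_stable : exponent ψ (stable ψ) = Multiplicative.ofAdd 1 :=
  lift_stable _ _ _

variable {ψ}

theorem base_injective (hψ : Function.Injective ψ) : Function.Injective (base ψ) := by
  let e : (⊤ : Subgroup G) ≃* ψ.range := Subgroup.topEquiv.trans (MonoidHom.ofInjective hψ)
  let toHNN : MappingTorus ψ →* HNNExtension G ⊤ ψ.range e :=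
    lift ψ HNNExtension.of HNNExtension.t fun g => by
      simpa [e, MonoidHom.ofInjective_apply] using HNNExtension.t_mul_of (φ := e) ⟨g, trivial⟩
  have hcomp : ⇑toHNN ∘ base ψ = HNNExtension.of := funext (lift_base _ _ _)
  exact .of_comp (f := toHNN) (hcomp ▸ HNNExtension.of_injective e)

theorem injective_of_injective_comp_base {K M : Type*} [Group K] [Group M] [IsMulTorsionFree M]
    {f : MappingTorus ψ →* K} (χ : K →* M) (hf : Function.Injective (f.comp (base ψ)))
    (hχ_base : ∀ g, χ (f (base ψ g)) = 1) (hχ_stable : χ (f (stable ψ)) ≠ 1) :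
    Function.Injective f := by
  rw [injective_iff_map_eq_one]
  intro x hx
  obtain ⟨p, q, g, rfl⟩ := exists_eq_inv_stable_pow_mul_base_mul_stable_pow ψ x
  rw [map_mul, map_mul, map_inv, mul_assoc, inv_mul_eq_one] at hx
  have hpq : p = q := by
    have hχ := congrArg χ hx
    simp only [map_mul, map_pow, hχ_base, one_mul] at hχ
    exact (IsMulTorsionFree.pow_right_inj hχ_stable).mp hχ
  subst hpq
  have hg : g = 1 := hf <| by simpa using right_eq_mul.mp hx
  simp [hg]

theorem exists_mulEquiv_closure_of_conj {φ : G →* G} (hφ : Function.Injective φ)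
    {V : Subgroup G} {ψ : V →* V} (s : MappingTorus φ)
    (hs : ∀ y : V, s * base φ y = base φ (ψ y) * s) (hs_exponent : exponent φ s ≠ 1) :
    ∃ e : MappingTorus ψ ≃*
        Subgroup.closure (insert s ((V.map (base φ) : Subgroup (MappingTorus φ)) :
          Set (MappingTorus φ))),
      (∀ y : V, (e (base ψ y) : MappingTorus φ) = base φ (y : G)) ∧
        (e (stable ψ) : MappingTorus φ) = s := by
  set f := lift ψ ((base φ).comp V.subtype) s hs
  have hf_base (y : V) : f (base ψ y) = base φ y := lift_base _ _ hs y
  have hf_stable : f (stable ψ) = s := lift_stable _ _ hs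
  have hf : Function.Injective f := by
    refine injective_of_injective_comp_base (exponent φ) ?_ (fun y => ?_)
      (hf_stable ▸ hs_exponent)
    · rw [show f.comp (base ψ) = (base φ).comp V.subtype from lift_comp_base _ _ hs]
      exact (base_injective hφ).comp Subtype.val_injective
    · rw [hf_base, exponent_base]
  have hf_range :
      f.range = Subgroup.closure (insert s (V.map (base φ) : Set (MappingTorus φ))) := by
    rw [show f.range = _ from range_lift _ _ hs, MonoidHom.range_comp, Subgroup.range_subtype]
  exact ⟨(MonoidHom.ofInjective hf).trans (MulEquiv.subgroupCongr hf_range), hf_base, hf_stable⟩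

end MappingTorus

theorem stmt9_general {α : Type*} (φ : FreeGroup α →* FreeGroup α) (hφ : Function.Injective φ)
    (u : FreeGroup α) (m : ℕ) (hm : 1 ≤ m)
    (V : Subgroup (FreeGroup α))
    (ψ : V →* V) (hψ : ∀ y : V, (ψ y : FreeGroup α) = u * iterateHom φ m y * u⁻¹) :
    ∃ e : MappingTorus ψ ≃*
        (Subgroup.closure
          (insert (MappingTorus.base φ u * MappingTorus.stable φ ^ m)
            ((V.map (MappingTorus.base φ) : Subgroup (MappingTorus φ)) :
              Set (MappingTorus φ)))),
      (∀ y : V,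
        (e (MappingTorus.base ψ y) : MappingTorus φ) = MappingTorus.base φ (y : FreeGroup α)) ∧
      (e (MappingTorus.stable ψ) : MappingTorus φ)
        = MappingTorus.base φ u * MappingTorus.stable φ ^ m := by
  refine MappingTorus.exists_mulEquiv_closure_of_conj hφ _ (fun y => ?_) ?_
  · rw [hψ, MappingTorus.base_mul_stable_pow_mul_base]
  · simpa using Nat.one_le_iff_ne_zero.mp hm

/-- A sub-mapping torus subgroup `H = ⟨s, V⟩` of `G_φ`, where `s = u t^m` and
`s V s⁻¹ ≤ V`, is isomorphic to the mapping torus of the injective endomorphism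
`ψ : V → V`, `ψ(y) = u φ^m(y) u⁻¹`, via an isomorphism restricting to the identity
on `V` and sending the stable letter to `s`. -/
theorem stmt9 {α : Type*} (φ : FreeGroup α →* FreeGroup α) (hφ : Function.Injective φ)
    (u : FreeGroup α) (m : ℕ) (hm : 1 ≤ m)
    (V : Subgroup (FreeGroup α)) (hV1 : V ≠ ⊥) (hV2 : V.FG)
    (hinv : ∀ v ∈ V, u * iterateHom φ m v * u⁻¹ ∈ V)
    (ψ : V →* V) (hψ : ∀ y : V, (ψ y : FreeGroup α) = u * iterateHom φ m y * u⁻¹) :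
    ∃ e : MappingTorus ψ ≃*
        (Subgroup.closure
          (insert (MappingTorus.base φ u * MappingTorus.stable φ ^ m)
            ((V.map (MappingTorus.base φ) : Subgroup (MappingTorus φ)) :
              Set (MappingTorus φ)))),
      (∀ y : V,
        (e (MappingTorus.base ψ y) : MappingTorus φ) = MappingTorus.base φ (y : FreeGroup α)) ∧
      (e (MappingTorus.stable ψ) : MappingTorus φ)
        = MappingTorus.base φ u * MappingTorus.stable φ ^ m :=
  stmt9_general φ hφ u m hm V ψ hψ
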